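/- For every s, t > 0, the map (u,v) ↦ ψ(s,t;u,v) is 2-increasing: for all u₁ ≤ u₂ and v₁ ≤ v₂ in [0,1], ψ(s,t;u₂,v₂) − ψ(s,t;u₂,v₁) − ψ(s,t;u₁,v₂) + ψ(s,t;u₁,v₁) ≥ 0. Hence, together with the boundary conditions, ψ(s,t;·,·) is a bivariate copula. -/

import Mathlib

open MeasureTheory Set Filter Topology

/-- Density of the standard normal distribution (φ). -/
noncomputable def stdNormalPDF (x : ℝ) : ℝ := (Real.sqrt (2 * Real.pi))⁻¹ * Real.exp (-x ^ 2 / 2)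

/-- Cumulative distribution function of the standard normal distribution (Φ). -/
noncomputable def stdNormalCDF (x : ℝ) : ℝ := ∫ t in Set.Iic x, stdNormalPDF t

/-- The standard normal quantile function (Φ⁻¹), the inverse of Φ on (0,1). -/
noncomputable def stdNormalCDFInv : ℝ → ℝ := Function.invFun stdNormalCDF

/-- The integrand of the Brownian-copula kernel; the `if` branches encode the
conventions Φ⁻¹(0) = -∞ (so Φ(·) = 0) and Φ⁻¹(1) = +∞ (so Φ(·) = 1). -/
noncomputable def psiIntegrand (s t v w : ℝ) : ℝ :=
  if v ≤ 0 then 0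
  else if 1 ≤ v then 1
  else stdNormalCDF ((Real.sqrt (max s t) * stdNormalCDFInv v -
      Real.sqrt (min s t) * stdNormalCDFInv w) / Real.sqrt |t - s|)

/-- The Brownian-copula kernel ψ(s,t;u,v). -/
noncomputable def psi (s t u v : ℝ) : ℝ :=
  if 0 < |t - s| then ∫ w in (0:ℝ)..u, psiIntegrand s t v w
  else if 0 < t then min u v
  else u * v

lemma stdNormalPDF_pos (x : ℝ) : 0 < stdNormalPDF x := by
  unfold stdNormalPDF
  have := Real.pi_pos
  positivity

lemma stdNormalPDF_eq (x : ℝ) :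
    stdNormalPDF x = (Real.sqrt (2 * Real.pi))⁻¹ * Real.exp (-(1/2 : ℝ) * x ^ 2) := by
  unfold stdNormalPDF; ring_nf

lemma integrable_stdNormalPDF : Integrable stdNormalPDF := by
  have h : Integrable (fun x : ℝ => (Real.sqrt (2 * Real.pi))⁻¹ *
      Real.exp (-(1/2 : ℝ) * x ^ 2)) :=
    (integrable_exp_neg_mul_sq (by norm_num)).const_mul _
  exact h.congr (Eventually.of_forall fun x => (stdNormalPDF_eq x).symm)

lemma integral_stdNormalPDF : ∫ x, stdNormalPDF x = 1 := by
  have h2 : (0:ℝ) < 2 * Real.pi := by positivity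
  calc ∫ x, stdNormalPDF x
      = ∫ x, (Real.sqrt (2 * Real.pi))⁻¹ * Real.exp (-(1/2 : ℝ) * x ^ 2) := by
        simp_rw [stdNormalPDF_eq]
    _ = (Real.sqrt (2 * Real.pi))⁻¹ * ∫ x, Real.exp (-(1/2 : ℝ) * x ^ 2) := by
        rw [integral_const_mul]
    _ = (Real.sqrt (2 * Real.pi))⁻¹ * Real.sqrt (2 * Real.pi) := by
        rw [integral_gaussian, show Real.pi / (1/2 : ℝ) = 2 * Real.pi by ring]
    _ = 1 := inv_mul_cancel₀ (by positivity)

lemma stdNormalCDF_nonneg (x : ℝ) : 0 ≤ stdNormalCDF x :=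
  setIntegral_nonneg measurableSet_Iic fun y _ => (stdNormalPDF_pos y).le

lemma stdNormalCDF_le_one (x : ℝ) : stdNormalCDF x ≤ 1 := by
  rw [← integral_stdNormalPDF]
  exact setIntegral_le_integral integrable_stdNormalPDF
    (Eventually.of_forall fun y => (stdNormalPDF_pos y).le)

lemma stdNormalCDF_strictMono : StrictMono stdNormalCDF := by
  intro x y hxy
  have key : stdNormalCDF y - stdNormalCDF x = ∫ w in x..y, stdNormalPDF w :=
    intervalIntegral.integral_Iic_sub_Iic integrable_stdNormalPDF.integrableOn
      integrable_stdNormalPDF.integrableOn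
  have hpos : 0 < ∫ w in x..y, stdNormalPDF w :=
    intervalIntegral.intervalIntegral_pos_of_pos_on
      integrable_stdNormalPDF.intervalIntegrable
      (fun w _ => stdNormalPDF_pos w) hxy
  linarith
/-- continuity of the CDF via a Lipschitz bound -/
lemma stdNormalCDF_continuous : Continuous stdNormalCDF := by
  have hC : ∀ w : ℝ, ‖stdNormalPDF w‖ ≤ (Real.sqrt (2 * Real.pi))⁻¹ := by
    intro w
    rw [Real.norm_eq_abs, abs_of_pos (stdNormalPDF_pos w)]
    unfold stdNormalPDF
    have h1 : Real.exp (-w ^ 2 / 2) ≤ 1 := by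
      rw [Real.exp_le_one_iff]
      nlinarith [sq_nonneg w]
    nlinarith [inv_nonneg.2 (Real.sqrt_nonneg (2 * Real.pi))]
  have key : ∀ x y : ℝ, stdNormalCDF y - stdNormalCDF x = ∫ w in x..y, stdNormalPDF w :=
    fun x y => intervalIntegral.integral_Iic_sub_Iic integrable_stdNormalPDF.integrableOn
      integrable_stdNormalPDF.integrableOn
  have : LipschitzWith ⟨(Real.sqrt (2 * Real.pi))⁻¹, by positivity⟩ stdNormalCDF := by
    apply LipschitzWith.of_dist_le_mul
    intro x y
    simp only [NNReal.coe_mk, Real.dist_eq]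
    rw [key y x]
    exact intervalIntegral.norm_integral_le_of_norm_le_const fun w _ => hC w
  exact this.continuous

lemma stdNormalCDF_surjOn : ∀ y ∈ Ioo (0:ℝ) 1, ∃ x, stdNormalCDF x = y := by
  have h1 : Tendsto (fun n : ℕ => stdNormalCDF n) atTop (𝓝 1) := by
    have hu : ⋃ n : ℕ, Iic (n : ℝ) = univ := by
      apply eq_univ_of_forall
      intro x
      obtain ⟨n, hn⟩ := exists_nat_ge x
      exact mem_iUnion.2 ⟨n, hn⟩
    have := tendsto_setIntegral_of_monotone (f := stdNormalPDF) (μ := volume)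
      (s := fun n : ℕ => Iic (n : ℝ)) (fun n => measurableSet_Iic)
      (fun a b hab => Iic_subset_Iic.2 (by exact_mod_cast hab))
      (by rw [hu]; exact integrable_stdNormalPDF.integrableOn)
    rw [hu] at this
    simpa [stdNormalCDF, setIntegral_univ, integral_stdNormalPDF] using this
  have h0 : Tendsto (fun n : ℕ => stdNormalCDF (-(n:ℝ))) atTop (𝓝 0) := by
    have hi : ⋂ n : ℕ, Iic (-(n : ℝ)) = ∅ := by
      apply eq_empty_of_forall_notMem
      intro x hx
      obtain ⟨n, hn⟩ := exists_nat_gt (-x)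
      have := mem_iInter.1 hx n
      simp only [mem_Iic] at this
      linarith
    have := tendsto_setIntegral_of_antitone (f := stdNormalPDF) (μ := volume)
      (s := fun n : ℕ => Iic (-(n : ℝ))) (fun n => measurableSet_Iic)
      (fun a b hab => Iic_subset_Iic.2 (by exact_mod_cast neg_le_neg (Nat.cast_le.2 hab)))
      ⟨0, integrable_stdNormalPDF.integrableOn⟩
    rw [hi] at this
    simpa [stdNormalCDF] using this
  rintro y ⟨hy0, hy1⟩
  obtain ⟨n, hn⟩ := (h0.eventually_lt_const hy0).exists
  obtain ⟨m, hm⟩ := (h1.eventually_const_lt hy1).exists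
  have hab : (-(n:ℝ)) ≤ (m : ℝ) := le_trans (neg_nonpos.2 (Nat.cast_nonneg n)) (Nat.cast_nonneg m)
  have := intermediate_value_Icc hab stdNormalCDF_continuous.continuousOn
  obtain ⟨x, _, hx⟩ := this ⟨hn.le, hm.le⟩
  exact ⟨x, hx⟩

lemma stdNormalCDF_invFun_eq {v : ℝ} (hv : v ∈ Ioo (0:ℝ) 1) :
    stdNormalCDF (stdNormalCDFInv v) = v := by
  obtain ⟨x, hx⟩ := stdNormalCDF_surjOn v hv
  exact Function.invFun_eq ⟨x, hx⟩

lemma stdNormalCDFInv_monotoneOn : MonotoneOn stdNormalCDFInv (Ioo (0:ℝ) 1) := by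
  intro a ha b hb hab
  rw [← stdNormalCDF_strictMono.le_iff_le, stdNormalCDF_invFun_eq ha,
    stdNormalCDF_invFun_eq hb]
  exact hab

lemma psiIntegrand_nonneg (s t v w : ℝ) : 0 ≤ psiIntegrand s t v w := by
  unfold psiIntegrand
  split_ifs
  · exact le_refl 0
  · norm_num
  · exact stdNormalCDF_nonneg _

lemma psiIntegrand_le_one (s t v w : ℝ) : psiIntegrand s t v w ≤ 1 := by
  unfold psiIntegrand
  split_ifs
  · norm_num
  · exact le_refl 1
  · exact stdNormalCDF_le_one _

lemma psiIntegrand_mono_v (s t w : ℝ) (hst : 0 < |t - s|) {v₁ v₂ : ℝ} (h : v₁ ≤ v₂) :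
    psiIntegrand s t v₁ w ≤ psiIntegrand s t v₂ w := by
  by_cases h1 : v₁ ≤ 0
  · rw [psiIntegrand, if_pos h1]
    exact psiIntegrand_nonneg s t v₂ w
  · by_cases h2 : 1 ≤ v₂
    · calc psiIntegrand s t v₁ w ≤ 1 := psiIntegrand_le_one s t v₁ w
        _ = psiIntegrand s t v₂ w := by
            rw [psiIntegrand, if_neg (by linarith : ¬ v₂ ≤ 0), if_pos h2]
    · have hv1 : v₁ ∈ Ioo (0:ℝ) 1 := ⟨lt_of_not_ge h1, by push_neg at h2; linarith⟩
      have hv2 : v₂ ∈ Ioo (0:ℝ) 1 := ⟨by linarith [hv1.1], lt_of_not_ge h2⟩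
      rw [psiIntegrand, if_neg h1, if_neg (not_le.2 hv1.2),
        psiIntegrand, if_neg (not_le.2 hv2.1), if_neg h2]
      apply stdNormalCDF_strictMono.monotone
      have hinv := stdNormalCDFInv_monotoneOn hv1 hv2 h
      have hd : (0:ℝ) < Real.sqrt |t - s| := Real.sqrt_pos.2 hst
      gcongr

lemma psiIntegrand_anti_w (s t v : ℝ) : AntitoneOn (fun w => psiIntegrand s t v w) (Ioo (0:ℝ) 1) := by
  intro a ha b hb hab
  unfold psiIntegrand
  split_ifs
  · exact le_refl 0
  · exact le_refl 1
  · apply stdNormalCDF_strictMono.monotone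
    have hinv := stdNormalCDFInv_monotoneOn ha hb hab
    gcongr

lemma psiIntegrand_intervalIntegrable (s t v : ℝ) {u : ℝ} (hu : u ∈ Icc (0:ℝ) 1) :
    IntervalIntegrable (psiIntegrand s t v) volume 0 u := by
  rw [intervalIntegrable_iff_integrableOn_Ioc_of_le hu.1]
  have hmeas : AEMeasurable (psiIntegrand s t v) (volume.restrict (Ioc 0 u)) := by
    rw [← Measure.restrict_congr_set Ioo_ae_eq_Ioc]
    exact aemeasurable_restrict_of_antitoneOn measurableSet_Ioo
      ((psiIntegrand_anti_w s t v).mono (Ioo_subset_Ioo le_rfl hu.2))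
  apply Integrable.mono' (g := fun _ => (1:ℝ))
  · exact integrableOn_const measure_Ioc_lt_top.ne
  · exact hmeas.aestronglyMeasurable
  · refine Eventually.of_forall fun w => ?_
    rw [Real.norm_eq_abs, abs_of_nonneg (psiIntegrand_nonneg s t v w)]
    exact psiIntegrand_le_one s t v w

/-- For s, t > 0, the map (u,v) ↦ ψ(s,t;u,v) is 2-increasing on [0,1]². -/
theorem psi_two_increasing (s t : ℝ) (hs : 0 < s) (ht : 0 < t) :
    ∀ u₁ ∈ Set.Icc (0:ℝ) 1, ∀ u₂ ∈ Set.Icc (0:ℝ) 1,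
    ∀ v₁ ∈ Set.Icc (0:ℝ) 1, ∀ v₂ ∈ Set.Icc (0:ℝ) 1,
      u₁ ≤ u₂ → v₁ ≤ v₂ →
        0 ≤ psi s t u₂ v₂ - psi s t u₂ v₁ - psi s t u₁ v₂ + psi s t u₁ v₁ := by
  intro u₁ hu₁ u₂ hu₂ v₁ hv₁ v₂ hv₂ hu hv
  by_cases hst : 0 < |t - s|
  · simp only [psi, if_pos hst]
    have i1a : IntervalIntegrable (psiIntegrand s t v₁) volume 0 u₁ :=
      psiIntegrand_intervalIntegrable s t v₁ hu₁
    have i1b : IntervalIntegrable (psiIntegrand s t v₁) volume 0 u₂ :=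
      psiIntegrand_intervalIntegrable s t v₁ hu₂
    have i2a : IntervalIntegrable (psiIntegrand s t v₂) volume 0 u₁ :=
      psiIntegrand_intervalIntegrable s t v₂ hu₁
    have i2b : IntervalIntegrable (psiIntegrand s t v₂) volume 0 u₂ :=
      psiIntegrand_intervalIntegrable s t v₂ hu₂
    have hsub : uIcc u₁ u₂ ⊆ uIcc (0:ℝ) u₂ := by
      rw [uIcc_of_le hu, uIcc_of_le (hu₁.1.trans hu)]
      exact Icc_subset_Icc hu₁.1 le_rfl
    have i1m : IntervalIntegrable (psiIntegrand s t v₁) volume u₁ u₂ := i1b.mono_set hsub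
    have i2m : IntervalIntegrable (psiIntegrand s t v₂) volume u₁ u₂ := i2b.mono_set hsub
    rw [← intervalIntegral.integral_add_adjacent_intervals i1a i1m,
      ← intervalIntegral.integral_add_adjacent_intervals i2a i2m]
    have hmono : (∫ w in u₁..u₂, psiIntegrand s t v₁ w) ≤ ∫ w in u₁..u₂, psiIntegrand s t v₂ w :=
      intervalIntegral.integral_mono_on hu i1m i2m
        (fun w _ => psiIntegrand_mono_v s t w hst hv)
    linarith
  · simp only [psi, if_neg hst, if_pos ht]
    simp only [min_def]
    split_ifs <;> linarith
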